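/- arXiv:1910.07372 — 4 statements merged into one kernel-verified Lean document; each statement's English description precedes it below -/
import Mathlib

section
/- Let M be a connected topological n-manifold without boundary. Then for any two points x, y ∈ M there exists a single chart containing both: an open set U ⊆ M with x ∈ U and y ∈ U together with a homeomorphism from U onto ℝⁿ = EuclideanSpace ℝ (Fin n). -/
/-!
Say that `x` and `p` share a chart if some open set homeomorphic to `E` contains both. For fixed
`x` this is locally constant in `p`. Indeed, let `z, p` lie in a chart domain `e.source` with
`e.target = E`. If `x` is in the domain, the domain is a common chart. Otherwise transport the
homeomorphism `v ↦ v + φ v • (e p - e z)` of `E`, where `φ` is a bump of Lipschitz constant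
`< 1 / ‖e p - e z‖` supported in a ball, through `e`: it extends by the identity to a
homeomorphism of `M` sending `z` to `p` and fixing `x`, so it carries a common chart of `x, z` to
one of `x, p`. On a connected space a locally constant relation is constant, and it holds at
`p = x`.
-/

open Metric Set Function

section NormedSpace

variable {E : Type*} [NormedAddCommGroup E] [NormedSpace ℝ E] [CompleteSpace E]

theorem exists_homeomorph_eq_add_of_lipschitzWith {g : E → E} {c : NNReal}
    (hg : LipschitzWith c g) (hc : c < 1) : ∃ h : E ≃ₜ E, ∀ v, h v = v + g v := by
  have hf : ApproximatesLinearOn (fun v => v + g v)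
      (ContinuousLinearEquiv.refl ℝ E : E →L[ℝ] E) univ c := by
    refine LipschitzOnWith.approximatesLinearOn ?_
    simpa [Pi.sub_def] using hg.lipschitzOnWith (s := univ)
  refine ⟨hf.toHomeomorph _ ?_, fun _ => rfl⟩
  rcases subsingleton_or_nontrivial E with hE | hE
  · exact .inl hE
  · exact .inr (by simpa using hc)

theorem exists_homeomorph_apply_eq_of_dist_lt {a b : E} {r : ℝ} (hr : dist b a < r) :
    ∃ h : E ≃ₜ E, h a = b ∧ ∀ v ∉ ball a r, h v = v := by
  have hr0 : 0 < r := dist_nonneg.trans_lt hr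
  set φ : E → ℝ := fun v => max (1 - dist v a / r) 0
  have hφ : ∀ u v, |φ u - φ v| ≤ dist u v / r := fun u v => calc
    |φ u - φ v| ≤ |(1 - dist u a / r) - (1 - dist v a / r)| := abs_max_sub_max_le_abs _ _ _
    _ = |dist v a - dist u a| / r := by
      rw [← abs_of_pos hr0, ← abs_div, abs_of_pos hr0]; congr 1; ring
    _ ≤ dist u v / r := by gcongr; rw [dist_comm u v]; exact abs_dist_sub_le v u a
  have hlip : LipschitzWith (dist b a / r).toNNReal (fun v => φ v • (b - a)) := by
    refine LipschitzWith.of_dist_le' fun u v => ?_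
    calc dist (φ u • (b - a)) (φ v • (b - a)) = |φ u - φ v| * dist b a := by
          rw [dist_eq_norm, ← sub_smul, norm_smul, Real.norm_eq_abs, dist_eq_norm]
      _ ≤ dist u v / r * dist b a := by gcongr; exact hφ u v
      _ = dist b a / r * dist u v := by ring
  obtain ⟨h, hh⟩ := exists_homeomorph_eq_add_of_lipschitzWith hlip
    (by rwa [Real.toNNReal_lt_one, div_lt_one hr0])
  refine ⟨h, by simp [hh, φ], fun v hv => ?_⟩
  have hφv : φ v = 0 := max_eq_right <| by
    rw [sub_nonpos, one_le_div hr0]; simpa using hv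
  simp [hh, hφv]

end NormedSpace

namespace OpenPartialHomeomorph

variable {X Y : Type*} [TopologicalSpace X] [TopologicalSpace Y]

open scoped Classical in
noncomputable def transport (e : OpenPartialHomeomorph X Y) (h : Y → Y) : X → X :=
  e.source.piecewise (e.symm ∘ h ∘ e) id

variable {e : OpenPartialHomeomorph X Y}

theorem transport_of_mem (h : Y → Y) {x : X} (hx : x ∈ e.source) :
    e.transport h x = e.symm (h (e x)) := by
  classical exact piecewise_eq_of_mem _ _ _ hx

theorem transport_of_notMem (h : Y → Y) {x : X} (hx : x ∉ e.source) : e.transport h x = x := by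
  classical exact piecewise_eq_of_notMem _ _ _ hx

theorem leftInverse_transport (he : e.target = univ) {g h : Y → Y} (hgh : LeftInverse g h) :
    LeftInverse (e.transport g) (e.transport h) := by
  intro x
  by_cases hx : x ∈ e.source
  · have hmem : e.symm (h (e x)) ∈ e.source := e.map_target (he ▸ mem_univ _)
    rw [transport_of_mem h hx, transport_of_mem g hmem, e.right_inv (he ▸ mem_univ _), hgh,
      e.left_inv hx]
  · rw [transport_of_notMem h hx, transport_of_notMem g hx]

theorem continuous_transport [T2Space X] (he : e.target = univ) {h : Y → Y} (hh : Continuous h)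
    {K : Set Y} (hK : IsCompact K) (hid : ∀ v ∉ K, h v = v) : Continuous (e.transport h) := by
  have hsymm : Continuous e.symm := continuousOn_univ.mp (he ▸ e.continuousOn_symm)
  refine continuous_iff_continuousAt.mpr fun x => ?_
  by_cases hx : x ∈ e.source
  · refine (hsymm.continuousAt.comp (hh.continuousAt.comp (e.continuousAt hx))).congr ?_
    filter_upwards [e.open_source.mem_nhds hx] with x' hx'
    exact (transport_of_mem h hx').symm
  · -- `e.transport h` is the identity off the compact, hence closed, set `e.symm '' K`
    have hKsource : e.symm '' K ⊆ e.source := by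
      rw [← e.symm_image_target_eq_source, he]; exact image_mono (subset_univ K)
    refine continuousAt_id.congr ?_
    filter_upwards [(hK.image hsymm).isClosed.isOpen_compl.mem_nhds
      fun hxK => hx (hKsource hxK)] with x' hx'
    by_cases hx's : x' ∈ e.source
    · have : e x' ∉ K := fun hk => hx' ⟨e x', hk, e.left_inv hx's⟩
      rw [transport_of_mem h hx's, hid _ this, e.left_inv hx's]; rfl
    · exact (transport_of_notMem h hx's).symm

theorem exists_homeomorph_coe_eq_transport [T2Space X] (he : e.target = univ) (h : Y ≃ₜ Y)
    {K : Set Y} (hK : IsCompact K) (hid : ∀ v ∉ K, h v = v) :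
    ∃ g : X ≃ₜ X, ⇑g = e.transport h :=
  ⟨{ toFun := e.transport h
     invFun := e.transport h.symm
     left_inv := leftInverse_transport he h.symm_apply_apply
     right_inv := leftInverse_transport he h.apply_symm_apply
     continuous_toFun := continuous_transport he h.continuous hK hid
     continuous_invFun := continuous_transport he h.symm.continuous hK
       fun v hv => h.symm_apply_eq.mpr (hid v hv).symm }, rfl⟩

theorem exists_homeomorph_apply_eq_of_mem_source [T2Space X] {E : Type*} [NormedAddCommGroup E]
    [NormedSpace ℝ E] [ProperSpace E] {e : OpenPartialHomeomorph X E} (he : e.target = univ)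
    {z p : X} (hz : z ∈ e.source) (hp : p ∈ e.source) :
    ∃ g : X ≃ₜ X, g z = p ∧ ∀ x ∉ e.source, g x = x := by
  obtain ⟨h, hzp, hid⟩ := exists_homeomorph_apply_eq_of_dist_lt (lt_add_one (dist (e p) (e z)))
  obtain ⟨g, hg⟩ := exists_homeomorph_coe_eq_transport he h (isCompact_closedBall _ _)
    fun v hv => hid v fun hvb => hv (ball_subset_closedBall hvb)
  refine ⟨g, ?_, fun x hx => hg ▸ transport_of_notMem h hx⟩
  rw [hg, transport_of_mem h hz, hzp, e.left_inv hp]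

end OpenPartialHomeomorph

section ChartedSpace

variable {M : Type*} [TopologicalSpace M]

def SharesChart (E : Type*) [TopologicalSpace E] (x y : M) : Prop :=
  ∃ U : Set M, IsOpen U ∧ x ∈ U ∧ y ∈ U ∧ Nonempty (U ≃ₜ E)

theorem sharesChart_of_mem_source {E : Type*} [TopologicalSpace E]
    {e : OpenPartialHomeomorph M E} (he : e.target = univ) {x y : M} (hx : x ∈ e.source)
    (hy : y ∈ e.source) : SharesChart E x y :=
  ⟨e.source, e.open_source, hx, hy,
    ⟨e.toHomeomorphSourceTarget.trans
      ((Homeomorph.setCongr he).trans (Homeomorph.Set.univ E))⟩⟩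

variable {E : Type*} [NormedAddCommGroup E] [NormedSpace ℝ E]

theorem SharesChart.of_mem_source [ProperSpace E] [T2Space M] {e : OpenPartialHomeomorph M E}
    (he : e.target = univ) {x z p : M} (hxz : SharesChart E x z) (hz : z ∈ e.source)
    (hp : p ∈ e.source) : SharesChart E x p := by
  by_cases hx : x ∈ e.source
  · exact sharesChart_of_mem_source he hx hp
  obtain ⟨U, hU, hxU, hzU, ⟨ψ⟩⟩ := hxz
  obtain ⟨g, hgz, hgx⟩ := e.exists_homeomorph_apply_eq_of_mem_source he hz hp
  exact ⟨g '' U, g.isOpen_image.mpr hU, hgx x hx ▸ mem_image_of_mem g hxU,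
    hgz ▸ mem_image_of_mem g hzU, ⟨(g.image U).symm.trans ψ⟩⟩

variable (E) [ChartedSpace E M]

open OpenPartialHomeomorph in
theorem exists_openPartialHomeomorph_target_eq_univ (m : M) :
    ∃ e : OpenPartialHomeomorph M E, m ∈ e.source ∧ e.target = univ := by
  set c := chartAt E m
  obtain ⟨r, hr, hball⟩ := isOpen_iff.mp c.open_target _ (mem_chart_target E m)
  refine ⟨c.trans (univBall (c m) r).symm, ⟨mem_chart_source E m, ?_⟩, ?_⟩
  · simpa [univBall_target _ hr] using hr
  · refine eq_univ_of_forall fun u => ⟨by simp, hball ?_⟩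
    rw [← univBall_target (c m) hr]
    exact (univBall (c m) r).map_source (by simp)

theorem sharesChart_refl (x : M) : SharesChart E x x :=
  let ⟨_, hx, he⟩ := exists_openPartialHomeomorph_target_eq_univ E x
  sharesChart_of_mem_source he hx hx

theorem isLocallyConstant_sharesChart [ProperSpace E] [T2Space M] (x : M) :
    IsLocallyConstant (SharesChart E x) := by
  refine (IsLocallyConstant.iff_eventually_eq _).mpr fun p => ?_
  obtain ⟨e, hp, he⟩ := exists_openPartialHomeomorph_target_eq_univ E p
  filter_upwards [e.open_source.mem_nhds hp] with q hq
  exact propext ⟨fun h => h.of_mem_source he hq hp, fun h => h.of_mem_source he hp hq⟩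

end ChartedSpace

theorem exists_chart_containing_two_points_general (n : ℕ)
    (M : Type*) [TopologicalSpace M] [T2Space M]
    [ChartedSpace (EuclideanSpace ℝ (Fin n)) M] [ConnectedSpace M] (x y : M) :
    ∃ U : Set M, IsOpen U ∧ x ∈ U ∧ y ∈ U ∧
      Nonempty (↥U ≃ₜ EuclideanSpace ℝ (Fin n)) :=
  show SharesChart _ x y from
    ((isLocallyConstant_sharesChart _ x).apply_eq_of_preconnectedSpace x y).mp
      (sharesChart_refl _ x)

/-- Let `M` be a connected topological `n`-manifold without boundary. Then any two points
`x, y ∈ M` lie in a common chart: there is an open set `U ⊆ M` containing both `x` and `y`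
which is homeomorphic to `ℝⁿ`. -/
theorem exists_chart_containing_two_points (n : ℕ)
    (M : Type*) [TopologicalSpace M] [T2Space M] [SecondCountableTopology M]
    [ChartedSpace (EuclideanSpace ℝ (Fin n)) M] [ConnectedSpace M] (x y : M) :
    ∃ U : Set M, IsOpen U ∧ x ∈ U ∧ y ∈ U ∧
      Nonempty (↥U ≃ₜ EuclideanSpace ℝ (Fin n)) :=
  exists_chart_containing_two_points_general n M x y
end

section
/- Alexander trick, part 1. Let n ≥ 1. Every self-homeomorphism h of the sphere Sⁿ⁻¹ extends to a self-homeomorphism H of the closed disc Dⁿ that sends 0 to 0; that is, there exists a homeomorphism H : Dⁿ ≃ₜ Dⁿ with H(0) = 0 and H(x) = h(x) for every x ∈ Sⁿ⁻¹. -/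
/-!
Extend `h` radially: send `r • u` to `r • h u` for `u` on the sphere and `r ≥ 0` (the cone on `h`).
This map preserves norms, so it is continuous at `0` and maps the disc onto itself; away from `0`
it is `h` conjugated by polar coordinates. The cone on `h⁻¹` inverts it.
-/

open Metric

variable {E : Type*} [NormedAddCommGroup E] [NormedSpace ℝ E]

lemma inv_norm_smul_mem_unitSphere {x : E} (hx : x ≠ 0) : ‖x‖⁻¹ • x ∈ sphere (0 : E) 1 := by
  simp [norm_smul, hx]

open Classical in
noncomputable def radialExtension (f : sphere (0 : E) 1 → sphere (0 : E) 1) (x : E) : E :=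
  if hx : x = 0 then 0 else ‖x‖ • (f ⟨‖x‖⁻¹ • x, inv_norm_smul_mem_unitSphere hx⟩ : E)

section radialExtension

variable (f g : sphere (0 : E) 1 → sphere (0 : E) 1)

@[simp]
lemma radialExtension_zero : radialExtension f 0 = 0 := by
  simp [radialExtension]

lemma radialExtension_of_ne_zero {x : E} (hx : x ≠ 0) :
    radialExtension f x = ‖x‖ • (f ⟨‖x‖⁻¹ • x, inv_norm_smul_mem_unitSphere hx⟩ : E) := by
  simp [radialExtension, hx]

lemma radialExtension_smul (u : sphere (0 : E) 1) {r : ℝ} (hr : 0 ≤ r) :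
    radialExtension f (r • (u : E)) = r • (f u : E) := by
  rcases hr.eq_or_lt with rfl | hr
  · simp
  have hu : ‖(u : E)‖ = 1 := mem_sphere_zero_iff_norm.1 u.2
  have hru : r • (u : E) ≠ 0 := smul_ne_zero hr.ne' (ne_zero_of_norm_ne_zero (by simp [hu]))
  have hnorm : ‖r • (u : E)‖ = r := by simp [norm_smul, hu, hr.le]
  rw [radialExtension_of_ne_zero f hru]
  congr 3
  ext1
  simp [hnorm, smul_smul, hr.ne']

lemma radialExtension_coe (u : sphere (0 : E) 1) : radialExtension f u = f u := by
  simpa using radialExtension_smul f u zero_le_one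

@[simp]
lemma norm_radialExtension (x : E) : ‖radialExtension f x‖ = ‖x‖ := by
  rcases eq_or_ne x 0 with rfl | hx
  · simp
  simp [radialExtension_of_ne_zero f hx, norm_smul]

lemma radialExtension_id : radialExtension (id : sphere (0 : E) 1 → sphere (0 : E) 1) = id := by
  ext1 x
  rcases eq_or_ne x 0 with rfl | hx
  · simp
  simp [radialExtension_of_ne_zero _ hx, smul_inv_smul₀ (norm_ne_zero_iff.2 hx)]

lemma radialExtension_comp : radialExtension g ∘ radialExtension f = radialExtension (g ∘ f) := by
  ext1 x
  rcases eq_or_ne x 0 with rfl | hx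
  · simp
  rw [Function.comp_apply, radialExtension_of_ne_zero f hx,
    radialExtension_smul g _ (norm_nonneg x), radialExtension_of_ne_zero (g ∘ f) hx,
    Function.comp_apply]

lemma continuous_radialExtension (hf : Continuous f) : Continuous (radialExtension f) := by
  refine continuous_iff_continuousAt.2 fun x => ?_
  rcases eq_or_ne x 0 with rfl | hx
  · rw [ContinuousAt, radialExtension_zero]
    exact squeeze_zero_norm (fun y => (norm_radialExtension f y).le) tendsto_norm_zero
  have hpolar : ({0}ᶜ : Set E).domRestrict (radialExtension f) =
      fun y : ({0}ᶜ : Set E) => ‖(y : E)‖ • (f (homeomorphUnitSphereProd E y).1 : E) := by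
    ext1 y
    rw [Set.domRestrict_apply, radialExtension_of_ne_zero f y.2]
    congr 3
    ext1
    simp
  refine (continuousOn_iff_continuous_domRestrict.2 ?_).continuousAt
    (isOpen_compl_singleton.mem_nhds hx)
  rw [hpolar]
  fun_prop

end radialExtension

noncomputable def Homeomorph.radialExtension (h : sphere (0 : E) 1 ≃ₜ sphere (0 : E) 1) :
    E ≃ₜ E where
  toFun := _root_.radialExtension h
  invFun := _root_.radialExtension h.symm
  left_inv x := by simpa [radialExtension_id] using congrFun (radialExtension_comp h h.symm) x
  right_inv x := by simpa [radialExtension_id] using congrFun (radialExtension_comp h.symm h) x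
  continuous_toFun := continuous_radialExtension h h.continuous
  continuous_invFun := continuous_radialExtension h.symm h.symm.continuous

theorem alexander_trick_extension_general (n : ℕ)
    (h : ↥(Metric.sphere (0 : EuclideanSpace ℝ (Fin n)) 1) ≃ₜ
      ↥(Metric.sphere (0 : EuclideanSpace ℝ (Fin n)) 1)) :
    ∃ H : ↥(Metric.closedBall (0 : EuclideanSpace ℝ (Fin n)) 1) ≃ₜ
        ↥(Metric.closedBall (0 : EuclideanSpace ℝ (Fin n)) 1),
      (H ⟨0, Metric.mem_closedBall_self zero_le_one⟩ : EuclideanSpace ℝ (Fin n)) = 0 ∧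
      ∀ x : ↥(Metric.sphere (0 : EuclideanSpace ℝ (Fin n)) 1),
        (H ⟨(x : EuclideanSpace ℝ (Fin n)), Metric.sphere_subset_closedBall x.2⟩ :
            EuclideanSpace ℝ (Fin n)) =
          (h x : EuclideanSpace ℝ (Fin n)) :=
  ⟨(Homeomorph.radialExtension h).subtype fun x => by simp [Homeomorph.radialExtension],
    radialExtension_zero h, radialExtension_coe h⟩

/-- **Alexander trick, part 1.** Let `n ≥ 1`. Every self-homeomorphism `h` of the sphere
`Sⁿ⁻¹` extends to a self-homeomorphism `H` of the closed disc `Dⁿ` sending `0` to `0`: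
there is a homeomorphism `H : Dⁿ ≃ₜ Dⁿ` with `H 0 = 0` and `H x = h x` for all `x ∈ Sⁿ⁻¹`. -/
theorem alexander_trick_extension (n : ℕ) [NeZero n]
    (h : ↥(Metric.sphere (0 : EuclideanSpace ℝ (Fin n)) 1) ≃ₜ
      ↥(Metric.sphere (0 : EuclideanSpace ℝ (Fin n)) 1)) :
    ∃ H : ↥(Metric.closedBall (0 : EuclideanSpace ℝ (Fin n)) 1) ≃ₜ
        ↥(Metric.closedBall (0 : EuclideanSpace ℝ (Fin n)) 1),
      (H ⟨0, Metric.mem_closedBall_self zero_le_one⟩ : EuclideanSpace ℝ (Fin n)) = 0 ∧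
      ∀ x : ↥(Metric.sphere (0 : EuclideanSpace ℝ (Fin n)) 1),
        (H ⟨(x : EuclideanSpace ℝ (Fin n)), Metric.sphere_subset_closedBall x.2⟩ :
            EuclideanSpace ℝ (Fin n)) =
          (h x : EuclideanSpace ℝ (Fin n)) :=
  alexander_trick_extension_general n h
end

section
/- Alexander trick, part 2. Let n ≥ 1 and let f, g be self-homeomorphisms of the closed disc Dⁿ that map the boundary sphere Sⁿ⁻¹ onto itself. If the induced self-homeomorphisms of Sⁿ⁻¹ (the restrictions of f and g) are isotopic, then f and g are isotopic as self-homeomorphisms of Dⁿ. -/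
/-!
Let `Φ` be an isotopy from `f'` to `g'`. At time `t` the disc is cut at radius `r(t)`, where `r`
falls linearly from `1` to `0` on `[0, 1/3]`, vanishes on `[1/3, 2/3]` and rises back to `1` on
`[2/3, 1]`. Inside radius `r(t)` sits a copy of `f` (for `t ≤ 1/2`) or `g` shrunk by the factor
`r(t)`; outside it is the cone `x ↦ ‖x‖ • Φ_s (x / ‖x‖)`, with `s = 3t - 1` clamped to `[0, 1]`.
The pieces agree on `‖x‖ = r(t)` because `f` and `g` restrict to `Φ₀ = f'` and `Φ₁ = g'` on the
sphere, and the inner piece is continuous where `r(t) = 0` since its norm is at most `r(t)`.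
Each level is bijective: the same construction applied to `f⁻¹`, `g⁻¹`, `Φ_s⁻¹` inverts it.
-/

/-- Two self-homeomorphisms `f, g` of a topological space `X` are *isotopic* if there is a
continuous `H : X × [0,1] → X` with `H (·, 0) = f`, `H (·, 1) = g`, and every level `H (·, t)`
bijective. -/
def HomeoIsotopic {X : Type*} [TopologicalSpace X] (f g : X ≃ₜ X) : Prop :=
  ∃ H : X × ↥(Set.Icc (0 : ℝ) 1) → X,
    Continuous H ∧
    (∀ x, H (x, ⟨0, Set.left_mem_Icc.mpr zero_le_one⟩) = f x) ∧
    (∀ x, H (x, ⟨1, Set.right_mem_Icc.mpr zero_le_one⟩) = g x) ∧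
    ∀ t : ↥(Set.Icc (0 : ℝ) 1), Function.Bijective fun x => H (x, t)

open Metric Set Function Filter Topology

section

variable {E : Type*} [NormedAddCommGroup E] [NormedSpace ℝ E]

local notation "𝔻" => closedBall (0 : E) 1
local notation "𝕊" => sphere (0 : E) 1

noncomputable def toClosedUnitBall (y : E) : 𝔻 :=
  ⟨(max 1 ‖y‖)⁻¹ • y, by
    have h : 0 < max 1 ‖y‖ := lt_max_of_lt_left one_pos
    rw [mem_closedBall_zero_iff, norm_smul, norm_inv, Real.norm_of_nonneg h.le,
      inv_mul_le_one₀ h]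
    exact le_max_right _ _⟩

lemma continuous_toClosedUnitBall : Continuous (toClosedUnitBall : E → 𝔻) :=
  Continuous.subtype_mk (by fun_prop (disch := intro y; positivity)) _

lemma coe_toClosedUnitBall {y : E} (h : ‖y‖ ≤ 1) : (toClosedUnitBall y : E) = y := by
  simp [toClosedUnitBall, max_eq_left h]

lemma toClosedUnitBall_coe (u : 𝔻) : toClosedUnitBall (u : E) = u :=
  Subtype.ext (coe_toClosedUnitBall (mem_closedBall_zero_iff.mp u.2))

open Classical in
noncomputable def sphereCone (φ : 𝕊 → 𝕊) (x : E) : E :=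
  if hx : x = 0 then 0
  else
    let p := homeomorphUnitSphereProd E ⟨x, hx⟩
    (p.2 : ℝ) • (φ p.1 : E)

lemma sphereCone_zero (φ : 𝕊 → 𝕊) : sphereCone φ 0 = 0 := dif_pos rfl

lemma sphereCone_smul (φ : 𝕊 → 𝕊) {c : ℝ} (hc : 0 < c) (u : 𝕊) :
    sphereCone φ (c • (u : E)) = c • (φ u : E) := by
  have hne : c • (u : E) ≠ 0 := smul_ne_zero hc.ne' (ne_of_mem_sphere u.2 one_ne_zero)
  have hp : homeomorphUnitSphereProd E ⟨c • (u : E), hne⟩ = (u, ⟨c, hc⟩) :=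
    (homeomorphUnitSphereProd E).apply_symm_apply (u, ⟨c, hc⟩)
  rw [sphereCone, dif_neg hne, hp]

lemma exists_eq_pos_smul_sphere {x : E} (hx : x ≠ 0) :
    ∃ c : ℝ, 0 < c ∧ ∃ u : 𝕊, x = c • (u : E) := by
  let p := homeomorphUnitSphereProd E ⟨x, hx⟩
  exact ⟨p.2, p.2.2, p.1,
    congrArg Subtype.val ((homeomorphUnitSphereProd E).symm_apply_apply ⟨x, hx⟩).symm⟩

lemma norm_sphereCone (φ : 𝕊 → 𝕊) (x : E) : ‖sphereCone φ x‖ = ‖x‖ := by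
  rcases eq_or_ne x 0 with rfl | hx
  · simp [sphereCone_zero]
  obtain ⟨c, hc, u, rfl⟩ := exists_eq_pos_smul_sphere hx
  simp [sphereCone_smul φ hc, norm_smul, abs_of_pos hc]

lemma sphereCone_sphereCone (φ ψ : 𝕊 → 𝕊) (x : E) :
    sphereCone ψ (sphereCone φ x) = sphereCone (ψ ∘ φ) x := by
  rcases eq_or_ne x 0 with rfl | hx
  · simp [sphereCone_zero]
  obtain ⟨c, hc, u, rfl⟩ := exists_eq_pos_smul_sphere hx
  simp only [sphereCone_smul _ hc, comp_apply]

lemma sphereCone_id (x : E) : sphereCone id x = x := by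
  rcases eq_or_ne x 0 with rfl | hx
  · exact sphereCone_zero id
  obtain ⟨c, hc, u, rfl⟩ := exists_eq_pos_smul_sphere hx
  exact sphereCone_smul id hc u

lemma continuous_sphereCone {X : Type*} [TopologicalSpace X] {Φ : 𝕊 × X → 𝕊}
    (hΦ : Continuous Φ) : Continuous fun q : E × X => sphereCone (fun u => Φ (u, q.2)) q.1 := by
  refine continuous_iff_continuousAt.mpr fun ⟨x, p⟩ => ?_
  rcases eq_or_ne x 0 with rfl | hx
  · have h0 : Tendsto (fun q : E × X => ‖q.1‖) (𝓝 (0, p)) (𝓝 0) :=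
      (continuous_norm.comp continuous_fst).tendsto' ((0 : E), p) 0 norm_zero
    simpa only [ContinuousAt, sphereCone_zero] using
      squeeze_zero_norm (fun q => (norm_sphereCone _ q.1).le) h0
  · have hU : IsOpen {q : E × X | q.1 ≠ 0} := isOpen_compl_singleton.preimage continuous_fst
    refine ContinuousOn.continuousAt ?_ (hU.mem_nhds hx)
    rw [continuousOn_iff_continuous_domRestrict]
    have hrestrict :
        domRestrict {q : E × X | q.1 ≠ 0} (fun q => sphereCone (fun u => Φ (u, q.2)) q.1) =
        fun q => ((homeomorphUnitSphereProd E ⟨q.1.1, q.2⟩).2 : ℝ) •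
          (Φ ((homeomorphUnitSphereProd E ⟨q.1.1, q.2⟩).1, q.1.2) : E) := by
      funext q
      exact dif_neg q.2
    rw [hrestrict]
    fun_prop

/-- The retraction `toClosedUnitBall` only matters off the ball of radius `r`; for `r = 0` the
map is identically `0`. -/
noncomputable def scaledBallMap (r : ℝ) (h : 𝔻 → 𝔻) (x : E) : E :=
  r • (h (toClosedUnitBall (r⁻¹ • x)) : E)

lemma scaledBallMap_zero (h : 𝔻 → 𝔻) (x : E) : scaledBallMap 0 h x = 0 := zero_smul _ _

lemma scaledBallMap_one (h : 𝔻 → 𝔻) (u : 𝔻) : scaledBallMap 1 h u = h u := by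
  simp [scaledBallMap, toClosedUnitBall_coe]

lemma norm_scaledBallMap_le {r : ℝ} (hr : 0 ≤ r) (h : 𝔻 → 𝔻) (x : E) :
    ‖scaledBallMap r h x‖ ≤ r := by
  rw [scaledBallMap, norm_smul, Real.norm_of_nonneg hr]
  exact mul_le_of_le_one_right hr (mem_closedBall_zero_iff.mp (h _).2)

lemma scaledBallMap_scaledBallMap (r : ℝ) (h h' : 𝔻 → 𝔻) (x : E) :
    scaledBallMap r h' (scaledBallMap r h x) = scaledBallMap r (h' ∘ h) x := by
  rcases eq_or_ne r 0 with rfl | hr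
  · simp only [scaledBallMap_zero]
  simp only [scaledBallMap, inv_smul_smul₀ hr, toClosedUnitBall_coe, comp_apply]

lemma scaledBallMap_id {r : ℝ} {x : E} (hx : ‖x‖ ≤ r) : scaledBallMap r id x = x := by
  rcases (norm_nonneg x |>.trans hx).eq_or_lt with rfl | hr
  · rw [scaledBallMap_zero, norm_le_zero_iff.mp hx]
  have hx' : ‖r⁻¹ • x‖ ≤ 1 := by
    rw [norm_smul, norm_inv, Real.norm_of_nonneg hr.le, inv_mul_le_one₀ hr]
    exact hx
  rw [scaledBallMap, id, coe_toClosedUnitBall hx', smul_inv_smul₀ hr.ne']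

lemma scaledBallMap_eq_sphereCone {h : 𝔻 → 𝔻} {φ : 𝕊 → 𝕊}
    (hφ : ∀ u : 𝕊, (φ u : E) = h ⟨u, sphere_subset_closedBall u.2⟩)
    {r : ℝ} (hr : 0 < r) {x : E} (hx : ‖x‖ = r) : scaledBallMap r h x = sphereCone φ x := by
  obtain ⟨c, hc, u, rfl⟩ := exists_eq_pos_smul_sphere (norm_pos_iff.mp (hx ▸ hr))
  have hcr : c = r := by
    rwa [norm_smul, mem_sphere_zero_iff_norm.mp u.2, mul_one, Real.norm_of_nonneg hc.le] at hx
  subst hcr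
  rw [sphereCone_smul φ hc, hφ, scaledBallMap, inv_smul_smul₀ hc.ne']
  exact congrArg (fun v => c • (h v : E))
    (toClosedUnitBall_coe ⟨(u : E), sphere_subset_closedBall u.2⟩)

lemma continuousAt_scaledBallMap {X : Type*} [TopologicalSpace X] {r : X → ℝ}
    (hr : Continuous r) {h : 𝔻 → 𝔻} (hh : Continuous h) {q : E × X} (hq : r q.2 ≠ 0) :
    ContinuousAt (fun q : E × X => scaledBallMap (r q.2) h q.1) q := by
  unfold scaledBallMap
  have hr' : ContinuousAt (fun q : E × X => r q.2) q := (hr.comp continuous_snd).continuousAt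
  exact hr'.smul (continuous_subtype_val.continuousAt.comp
    ((hh.comp continuous_toClosedUnitBall).continuousAt.comp
      ((hr'.inv₀ hq).smul continuous_fst.continuousAt)))

noncomputable def alexanderMap (r : ℝ) (h : 𝔻 → 𝔻) (φ : 𝕊 → 𝕊) (x : E) : E :=
  if ‖x‖ ≤ r then scaledBallMap r h x else sphereCone φ x

lemma norm_alexanderMap_le_iff {r : ℝ} (hr : 0 ≤ r) (h : 𝔻 → 𝔻) (φ : 𝕊 → 𝕊) (x : E) :
    ‖alexanderMap r h φ x‖ ≤ r ↔ ‖x‖ ≤ r := by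
  by_cases hx : ‖x‖ ≤ r
  · simpa [alexanderMap, hx] using norm_scaledBallMap_le hr h x
  · simp [alexanderMap, hx, norm_sphereCone]

lemma alexanderMap_alexanderMap {r : ℝ} (hr : 0 ≤ r) (h h' : 𝔻 → 𝔻) (φ φ' : 𝕊 → 𝕊) (x : E) :
    alexanderMap r h' φ' (alexanderMap r h φ x) = alexanderMap r (h' ∘ h) (φ' ∘ φ) x := by
  have hy := norm_alexanderMap_le_iff hr h φ x
  by_cases hx : ‖x‖ ≤ r
  · rw [alexanderMap, if_pos (hy.mpr hx), alexanderMap, if_pos hx, scaledBallMap_scaledBallMap,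
      alexanderMap, if_pos hx]
  · rw [alexanderMap, if_neg (hy.not.mpr hx), alexanderMap, if_neg hx, sphereCone_sphereCone,
      alexanderMap, if_neg hx]

lemma alexanderMap_id (r : ℝ) (x : E) : alexanderMap r id id x = x := by
  unfold alexanderMap
  split_ifs with hx
  exacts [scaledBallMap_id hx, sphereCone_id x]

lemma alexanderMap_one (h : 𝔻 → 𝔻) (φ : 𝕊 → 𝕊) (u : 𝔻) : alexanderMap 1 h φ u = h u := by
  rw [alexanderMap, if_pos (mem_closedBall_zero_iff.mp u.2), scaledBallMap_one]

lemma mapsTo_alexanderMap {r : ℝ} (hr₀ : 0 ≤ r) (hr₁ : r ≤ 1) (h : 𝔻 → 𝔻) (φ : 𝕊 → 𝕊) :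
    MapsTo (alexanderMap r h φ) (closedBall 0 1) (closedBall 0 1) := by
  intro x hx
  rw [mem_closedBall_zero_iff] at hx ⊢
  by_cases hxr : ‖x‖ ≤ r
  · exact ((norm_alexanderMap_le_iff hr₀ h φ x).mpr hxr).trans hr₁
  · rwa [alexanderMap, if_neg hxr, norm_sphereCone]

lemma bijective_restrict_alexanderMap {r : ℝ} (hr₀ : 0 ≤ r) (hr₁ : r ≤ 1) {h : 𝔻 → 𝔻}
    (hh : Bijective h) {φ : 𝕊 → 𝕊} (hφ : Bijective φ) :
    Bijective ((mapsTo_alexanderMap hr₀ hr₁ h φ).restrict) := by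
  obtain ⟨h', hh'l, hh'r⟩ := bijective_iff_has_inverse.mp hh
  obtain ⟨φ', hφ'l, hφ'r⟩ := bijective_iff_has_inverse.mp hφ
  refine bijective_iff_has_inverse.mpr ⟨(mapsTo_alexanderMap hr₀ hr₁ h' φ').restrict,
    fun x => Subtype.ext ?_, fun x => Subtype.ext ?_⟩
  · simp [MapsTo.val_restrict_apply, alexanderMap_alexanderMap hr₀, hh'l.comp_eq_id,
      hφ'l.comp_eq_id, alexanderMap_id]
  · simp [MapsTo.val_restrict_apply, alexanderMap_alexanderMap hr₀, hh'r.comp_eq_id,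
      hφ'r.comp_eq_id, alexanderMap_id]

noncomputable def alexanderRadius (t : ℝ) : ℝ := max 0 (max (1 - 3 * t) (3 * t - 2))

lemma alexanderRadius_nonneg (t : ℝ) : 0 ≤ alexanderRadius t := le_max_left _ _

lemma alexanderRadius_le_one {t : ℝ} (ht : t ∈ Icc (0 : ℝ) 1) : alexanderRadius t ≤ 1 := by
  obtain ⟨h0, h1⟩ := ht
  unfold alexanderRadius
  exact max_le zero_le_one (max_le (by linarith) (by linarith))

lemma alexanderRadius_zero : alexanderRadius 0 = 1 := by norm_num [alexanderRadius]

lemma alexanderRadius_one : alexanderRadius 1 = 1 := by norm_num [alexanderRadius]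

lemma continuous_alexanderRadius : Continuous alexanderRadius := by
  unfold alexanderRadius; fun_prop

lemma lt_or_lt_of_alexanderRadius_pos {t : ℝ} (ht : 0 < alexanderRadius t) :
    t < 1 / 3 ∨ 2 / 3 < t := by
  by_contra! h
  have : alexanderRadius t ≤ 0 := max_le le_rfl (max_le (by linarith) (by linarith))
  linarith

noncomputable def alexanderPath (f g : 𝔻 → 𝔻) (Φ : 𝕊 × Icc (0 : ℝ) 1 → 𝕊) (q : E × ℝ) : E :=
  alexanderMap (alexanderRadius q.2) (if q.2 ≤ 1 / 2 then f else g)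
    (fun u => Φ (u, projIcc 0 1 zero_le_one (3 * q.2 - 1))) q.1

lemma continuous_scaledBallMap_alexanderRadius {f g : 𝔻 → 𝔻} (hf : Continuous f)
    (hg : Continuous g) : Continuous fun q : E × ℝ =>
      scaledBallMap (alexanderRadius q.2) (if q.2 ≤ 1 / 2 then f else g) q.1 := by
  refine continuous_iff_continuousAt.mpr fun q => ?_
  rcases (alexanderRadius_nonneg q.2).eq_or_lt with h0 | hpos
  · have hr : Tendsto (fun p : E × ℝ => alexanderRadius p.2) (𝓝 q) (𝓝 0) :=
      h0 ▸ (continuous_alexanderRadius.comp continuous_snd).continuousAt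
    simpa only [ContinuousAt, ← h0, scaledBallMap_zero] using
      squeeze_zero_norm (fun p => norm_scaledBallMap_le (alexanderRadius_nonneg p.2) _ p.1) hr
  rcases lt_or_lt_of_alexanderRadius_pos hpos with hlt | hgt
  · have hq : ∀ᶠ p : E × ℝ in 𝓝 q, p.2 < 1 / 2 :=
      continuous_snd.continuousAt.eventually_lt continuousAt_const (by linarith)
    refine (continuousAt_scaledBallMap continuous_alexanderRadius hf hpos.ne').congr ?_
    filter_upwards [hq] with p hp
    rw [if_pos hp.le]
  · have hq : ∀ᶠ p : E × ℝ in 𝓝 q, 1 / 2 < p.2 :=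
      continuousAt_const.eventually_lt continuous_snd.continuousAt (by linarith)
    refine (continuousAt_scaledBallMap continuous_alexanderRadius hg hpos.ne').congr ?_
    filter_upwards [hq] with p hp
    rw [if_neg hp.not_ge]

lemma continuous_alexanderPath {f g : 𝔻 → 𝔻} (hf : Continuous f) (hg : Continuous g)
    {Φ : 𝕊 × Icc (0 : ℝ) 1 → 𝕊} (hΦ : Continuous Φ)
    (hΦ₀ : ∀ u : 𝕊, (Φ (u, ⟨0, left_mem_Icc.2 zero_le_one⟩) : E) =
      f ⟨u, sphere_subset_closedBall u.2⟩)
    (hΦ₁ : ∀ u : 𝕊, (Φ (u, ⟨1, right_mem_Icc.2 zero_le_one⟩) : E) =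
      g ⟨u, sphere_subset_closedBall u.2⟩) :
    Continuous (alexanderPath f g Φ) := by
  refine (continuous_scaledBallMap_alexanderRadius hf hg).if_le
    (continuous_sphereCone (Φ := fun p : 𝕊 × ℝ => Φ (p.1, projIcc 0 1 zero_le_one (3 * p.2 - 1)))
      (by fun_prop))
    (continuous_norm.comp continuous_fst) (continuous_alexanderRadius.comp continuous_snd)
    fun ⟨x, t⟩ hx => ?_
  dsimp only at hx ⊢
  rcases (alexanderRadius_nonneg t).eq_or_lt with h0 | hpos
  · rw [← h0, scaledBallMap_zero, norm_eq_zero.mp (hx.trans h0.symm), sphereCone_zero]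
  rcases lt_or_lt_of_alexanderRadius_pos hpos with hlt | hgt
  · rw [if_pos (by linarith), projIcc_of_le_left zero_le_one (show 3 * t - 1 ≤ 0 by linarith)]
    exact scaledBallMap_eq_sphereCone hΦ₀ hpos hx
  · rw [if_neg (by linarith), projIcc_of_right_le zero_le_one (show 1 ≤ 3 * t - 1 by linarith)]
    exact scaledBallMap_eq_sphereCone hΦ₁ hpos hx

noncomputable def alexanderIsotopy (f g : 𝔻 → 𝔻) (Φ : 𝕊 × Icc (0 : ℝ) 1 → 𝕊)
    (p : 𝔻 × Icc (0 : ℝ) 1) : 𝔻 :=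
  ⟨alexanderPath f g Φ (p.1, p.2),
    mapsTo_alexanderMap (alexanderRadius_nonneg p.2) (alexanderRadius_le_one p.2.2) _ _ p.1.2⟩

theorem homeoIsotopic_of_homeoIsotopic_sphere {f g : 𝔻 ≃ₜ 𝔻} {f' g' : 𝕊 ≃ₜ 𝕊}
    (hf' : ∀ u : 𝕊, (f' u : E) = f ⟨u, sphere_subset_closedBall u.2⟩)
    (hg' : ∀ u : 𝕊, (g' u : E) = g ⟨u, sphere_subset_closedBall u.2⟩)
    (hiso : HomeoIsotopic f' g') : HomeoIsotopic f g := by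
  obtain ⟨Φ, hΦ, hΦ₀, hΦ₁, hΦbij⟩ := hiso
  refine ⟨alexanderIsotopy f g Φ, ?_, fun x => ?_, fun x => ?_, fun t => ?_⟩
  · have hcont := continuous_alexanderPath f.continuous g.continuous hΦ
      (fun u => by rw [hΦ₀, hf']) (fun u => by rw [hΦ₁, hg'])
    exact (hcont.comp (continuous_subtype_val.prodMap continuous_subtype_val)).subtype_mk _
  · exact Subtype.ext <| by
      simp [alexanderIsotopy, alexanderPath, alexanderRadius_zero, alexanderMap_one]
  · exact Subtype.ext <| by
      norm_num [alexanderIsotopy, alexanderPath, alexanderRadius_one, alexanderMap_one]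
  · have hfg : Bijective (if (t : ℝ) ≤ 1 / 2 then ⇑f else ⇑g) := by
      split_ifs
      exacts [f.bijective, g.bijective]
    exact bijective_restrict_alexanderMap (alexanderRadius_nonneg t) (alexanderRadius_le_one t.2)
      hfg (hΦbij (projIcc 0 1 zero_le_one (3 * t - 1)))

end

theorem alexander_trick_isotopy_general (n : ℕ)
    (f g : ↥(Metric.closedBall (0 : EuclideanSpace ℝ (Fin n)) 1) ≃ₜ
      ↥(Metric.closedBall (0 : EuclideanSpace ℝ (Fin n)) 1))
    (f' g' : ↥(Metric.sphere (0 : EuclideanSpace ℝ (Fin n)) 1) ≃ₜ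
      ↥(Metric.sphere (0 : EuclideanSpace ℝ (Fin n)) 1))
    (hf' : ∀ x : ↥(Metric.sphere (0 : EuclideanSpace ℝ (Fin n)) 1),
      (f' x : EuclideanSpace ℝ (Fin n)) =
        (f ⟨(x : EuclideanSpace ℝ (Fin n)), Metric.sphere_subset_closedBall x.2⟩ :
          EuclideanSpace ℝ (Fin n)))
    (hg' : ∀ x : ↥(Metric.sphere (0 : EuclideanSpace ℝ (Fin n)) 1),
      (g' x : EuclideanSpace ℝ (Fin n)) =
        (g ⟨(x : EuclideanSpace ℝ (Fin n)), Metric.sphere_subset_closedBall x.2⟩ :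
          EuclideanSpace ℝ (Fin n)))
    (hiso : HomeoIsotopic f' g') :
    HomeoIsotopic f g :=
  homeoIsotopic_of_homeoIsotopic_sphere hf' hg' hiso

/-- **Alexander trick, part 2.** Let `n ≥ 1` and let `f, g` be self-homeomorphisms of the
closed disc `Dⁿ` mapping the boundary sphere `Sⁿ⁻¹` onto itself. If the induced
self-homeomorphisms `f', g'` of `Sⁿ⁻¹` (the restrictions of `f` and `g`) are isotopic, then
`f` and `g` are isotopic as self-homeomorphisms of `Dⁿ`. -/
theorem alexander_trick_isotopy (n : ℕ) [NeZero n]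
    (f g : ↥(Metric.closedBall (0 : EuclideanSpace ℝ (Fin n)) 1) ≃ₜ
      ↥(Metric.closedBall (0 : EuclideanSpace ℝ (Fin n)) 1))
    (hf : ⇑f '' (Subtype.val ⁻¹' Metric.sphere (0 : EuclideanSpace ℝ (Fin n)) 1) =
      Subtype.val ⁻¹' Metric.sphere (0 : EuclideanSpace ℝ (Fin n)) 1)
    (hg : ⇑g '' (Subtype.val ⁻¹' Metric.sphere (0 : EuclideanSpace ℝ (Fin n)) 1) =
      Subtype.val ⁻¹' Metric.sphere (0 : EuclideanSpace ℝ (Fin n)) 1)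
    (f' g' : ↥(Metric.sphere (0 : EuclideanSpace ℝ (Fin n)) 1) ≃ₜ
      ↥(Metric.sphere (0 : EuclideanSpace ℝ (Fin n)) 1))
    (hf' : ∀ x : ↥(Metric.sphere (0 : EuclideanSpace ℝ (Fin n)) 1),
      (f' x : EuclideanSpace ℝ (Fin n)) =
        (f ⟨(x : EuclideanSpace ℝ (Fin n)), Metric.sphere_subset_closedBall x.2⟩ :
          EuclideanSpace ℝ (Fin n)))
    (hg' : ∀ x : ↥(Metric.sphere (0 : EuclideanSpace ℝ (Fin n)) 1),
      (g' x : EuclideanSpace ℝ (Fin n)) =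
        (g ⟨(x : EuclideanSpace ℝ (Fin n)), Metric.sphere_subset_closedBall x.2⟩ :
          EuclideanSpace ℝ (Fin n)))
    (hiso : HomeoIsotopic f' g') :
    HomeoIsotopic f g :=
  alexander_trick_isotopy_general n f g f' g' hf' hg' hiso
end

section
/- A quasi-isomorphism between nonnegatively graded chain complexes of free modules over a group ring is a chain homotopy equivalence: let π be a group, let R = ℤ[π] be its integral group ring, let C and D be ℕ-indexed chain complexes of R-modules such that every term of C and of D is a free R-module, and let f : C ⟶ D be a chain map inducing an isomorphism on homology in every degree. Then f is a chain homotopy equivalence; that is, there exists a chain map g : D ⟶ C together with chain homotopies from f ≫ g to the identity of C and from g ≫ f to the identity of D. -/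
open CategoryTheory

/-- A quasi-isomorphism between nonnegatively graded chain complexes of free modules over a
group ring is a chain homotopy equivalence: let `π` be a group, `R = ℤ[π]` its integral group
ring, and `C`, `D` chain complexes of `R`-modules indexed by `ℕ` all of whose terms are free
`R`-modules. If `f : C ⟶ D` induces an isomorphism on homology in every degree, then there is a
chain map `g : D ⟶ C` together with chain homotopies from `f ≫ g` to `𝟙 C` and from `g ≫ f`
to `𝟙 D`. -/
theorem quasiIso_of_free_is_homotopyEquiv (π : Type*) [Group π]
    (C D : ChainComplex (ModuleCat (MonoidAlgebra ℤ π)) ℕ)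
    (hC : ∀ n, Module.Free (MonoidAlgebra ℤ π) (C.X n))
    (hD : ∀ n, Module.Free (MonoidAlgebra ℤ π) (D.X n))
    (f : C ⟶ D) (hf : QuasiIso f) :
    ∃ g : D ⟶ C,
      Nonempty (Homotopy (f ≫ g) (𝟙 C)) ∧ Nonempty (Homotopy (g ≫ f) (𝟙 D)) := by
  have (n : ℕ) : Projective (C.X n) := have := hC n; inferInstance
  have (n : ℕ) : Projective (D.X n) := have := hD n; inferInstance
  obtain ⟨e, rfl⟩ := (ChainComplex.quasiIso_iff_of_projective f).1 hf
  exact ⟨e.inv, ⟨e.homotopyHomInvId⟩, ⟨e.homotopyInvHomId⟩⟩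
end
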